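/- If c2(t) → c2* > 0 as t → ∞ and h solves h' = -γ1 h c2(t) + c2(t)/(1 + c2(t)) with γ1 > 0, then h(t) → 1/(γ1(1 + c2*)) as t → ∞. -/

import Mathlib

/-!
The equation reads `h' = -γ1 c2(t) (h - ℓ(t))` with `ℓ(t) = 1/(γ1 (1 + c2(t))) → L`, so `h`
relaxes towards a moving target at rate at least `γ1 m`. Once `ℓ ≤ a`, at any level `b > a` we
have `h' ≤ -γ1 m (b - a)` while `h ≥ b`: so `h` falls below `b` in finite time, and since `h' < 0`
on the level itself it never crosses `b` upwards again. Symmetrically from below.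
-/

open Filter Topology Set

section Threshold

variable {u u' : ℝ → ℝ} {T κ ε : ℝ}

theorem exists_le_of_deriv_le_neg (hκ : 0 < κ) (hu : ∀ t ≥ T, HasDerivAt u (u' t) t)
    (hdec : ∀ t ≥ T, ε ≤ u t → u' t ≤ -κ) : ∃ t ≥ T, u t ≤ ε := by
  by_contra! habove
  have hdrop : ∀ t ≥ T, u t - u T ≤ -κ * (t - T) := fun t ht =>
    (convex_Ici T).image_sub_le_mul_sub_of_deriv_le
      (fun x hx => (hu x hx).continuousAt.continuousWithinAt)
      (fun x hx => (hu x (interior_subset hx)).differentiableAt.differentiableWithinAt)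
      (fun x hx => (hu x (interior_subset hx)).deriv ▸
        hdec x (interior_subset hx) (habove x (interior_subset hx)).le)
      T self_mem_Ici t ht ht
  have hwait : 0 ≤ (u T - ε) / κ := div_nonneg (by linarith [habove T le_rfl]) hκ.le
  have hreach := hdrop (T + (u T - ε) / κ) (by linarith)
  rw [add_sub_cancel_left, neg_mul, mul_div_cancel₀ _ hκ.ne'] at hreach
  linarith [habove (T + (u T - ε) / κ) (by linarith)]

theorem le_of_deriv_neg_of_le (hu : ∀ t ≥ T, HasDerivAt u (u' t) t)
    (hdec : ∀ t ≥ T, u t = ε → u' t < 0) (hT : u T ≤ ε) : ∀ t ≥ T, u t ≤ ε :=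
  fun _ ht => image_le_of_deriv_right_lt_deriv_boundary' (B := fun _ => ε) (B' := 0)
    (fun x hx => (hu x hx.1).continuousAt.continuousWithinAt)
    (fun x hx => (hu x hx.1).hasDerivWithinAt) hT continuousOn_const
    (fun _ _ => hasDerivWithinAt_const _ _ _) (fun x hx => hdec x hx.1) ⟨ht, le_rfl⟩

theorem eventually_le_of_deriv_le_neg (hκ : 0 < κ) (hu : ∀ t ≥ T, HasDerivAt u (u' t) t)
    (hdec : ∀ t ≥ T, ε ≤ u t → u' t ≤ -κ) : ∀ᶠ t in atTop, u t ≤ ε := by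
  obtain ⟨t₁, ht₁, hle⟩ := exists_le_of_deriv_le_neg hκ hu hdec
  refine eventually_atTop.2 ⟨t₁, le_of_deriv_neg_of_le (fun t ht => hu t (ht₁.trans ht))
    (fun t ht heq => ?_) hle⟩
  linarith [hdec t (ht₁.trans ht) heq.ge]

end Threshold

section Relaxation

variable {h y k : ℝ → ℝ} {m T : ℝ}

theorem eventually_lt_of_hasDerivAt_neg_mul_sub (hm : 0 < m) (hk : ∀ t ≥ T, m ≤ k t)
    (hh : ∀ t ≥ T, HasDerivAt h (-k t * (h t - y t)) t) {a b : ℝ}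
    (hy : ∀ᶠ t in atTop, y t ≤ a) (hab : a < b) : ∀ᶠ t in atTop, h t < b := by
  obtain ⟨T', hT'⟩ := eventually_atTop.1 hy
  have hdec : ∀ t ≥ max T T', (a + b) / 2 ≤ h t →
      -k t * (h t - y t) ≤ -(m * ((b - a) / 2)) := by
    intro t ht hge
    have hgap : (b - a) / 2 ≤ h t - y t := by linarith [hT' t (le_of_max_le_right ht)]
    have hkt := hk t (le_of_max_le_left ht)
    nlinarith
  filter_upwards [eventually_le_of_deriv_le_neg (by positivity)
    (fun t ht => hh t (le_of_max_le_left ht)) hdec] with t ht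
  linarith

theorem tendsto_of_hasDerivAt_neg_mul_sub (hm : 0 < m) (hk : ∀ t ≥ T, m ≤ k t)
    (hh : ∀ t ≥ T, HasDerivAt h (-k t * (h t - y t)) t) {L : ℝ}
    (hy : Tendsto y atTop (𝓝 L)) : Tendsto h atTop (𝓝 L) := by
  have hneg : ∀ t ≥ T, HasDerivAt (-h) (-k t * ((-h) t - (-y) t)) t := fun t ht =>
    (hh t ht).neg.congr_deriv (by simp only [Pi.neg_apply]; ring)
  refine tendsto_order.2 ⟨fun a ha => ?_, fun b hb => ?_⟩
  · obtain ⟨c, hac, hcL⟩ := exists_between ha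
    have hy' : ∀ᶠ t in atTop, (-y) t ≤ -c :=
      (hy.eventually (eventually_ge_nhds hcL)).mono fun t ht => neg_le_neg ht
    filter_upwards [eventually_lt_of_hasDerivAt_neg_mul_sub hm hk hneg hy'
      (neg_lt_neg hac)] with t ht
    simpa using ht
  · obtain ⟨c, hLc, hcb⟩ := exists_between hb
    exact eventually_lt_of_hasDerivAt_neg_mul_sub hm hk hh
      (hy.eventually (eventually_le_nhds hLc)) hcb

end Relaxation

theorem stmt19_general (γ1 c2star m : ℝ) (hγ1 : 0 < γ1) (hc2star : 0 < c2star)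
    (hm : 0 < m) (c2 h : ℝ → ℝ)
    (hc2pos : ∀ t, 0 ≤ t → m ≤ c2 t)
    (hc2lim : Tendsto c2 atTop (𝓝 c2star))
    (hode : ∀ t, 0 ≤ t →
      HasDerivAt h (-γ1 * h t * c2 t + c2 t / (1 + c2 t)) t) :
    Tendsto h atTop (𝓝 (1 / (γ1 * (1 + c2star)))) := by
  have htarget :
      Tendsto (fun t => 1 / (γ1 * (1 + c2 t))) atTop (𝓝 (1 / (γ1 * (1 + c2star)))) :=
    tendsto_const_nhds.div ((hc2lim.const_add 1).const_mul γ1) (by positivity)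
  refine tendsto_of_hasDerivAt_neg_mul_sub (k := fun t => γ1 * c2 t) (T := 0)
    (mul_pos hγ1 hm) (fun t ht => mul_le_mul_of_nonneg_left (hc2pos t ht) hγ1.le)
    (fun t ht => ?_) htarget
  have hpos : 0 < 1 + c2 t := by linarith [hc2pos t ht]
  convert hode t ht using 1
  field_simp
  ring

/-- Asymptotic behaviour of the hyaluron ODE with convergent input:
    if c2(t) → c2* > 0 then h(t) → 1/(γ1(1 + c2*)). -/
theorem stmt19 (γ1 c2star m : ℝ) (hγ1 : 0 < γ1) (hc2star : 0 < c2star)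
    (hm : 0 < m) (c2 h : ℝ → ℝ) (hc2c : Continuous c2)
    (hc2pos : ∀ t, 0 ≤ t → m ≤ c2 t)
    (hc2lim : Tendsto c2 atTop (𝓝 c2star))
    (hbdd : ∃ C, ∀ t, 0 ≤ t → |h t| ≤ C)
    (hode : ∀ t, 0 ≤ t →
      HasDerivAt h (-γ1 * h t * c2 t + c2 t / (1 + c2 t)) t) :
    Tendsto h atTop (𝓝 (1 / (γ1 * (1 + c2star)))) :=
  stmt19_general γ1 c2star m hγ1 hc2star hm c2 h hc2pos hc2lim hode
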